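/- Let a,b,c,d,e,h be positive real numbers, χ := ac/(bd), and let θ₁,θ₂,σ₁,σ₂ ∈ Λ₁ be odd. Define the coordinate tuples B := (√2·ab/e)·(1, 1, 1, θ₁θ₂/2 | hθ₁, h⁻¹θ₂, −h⁻¹θ₂, hθ₁) and D := (x₁, x₂, −y, z | ξ₁⁺, ξ₂⁺, ξ₁⁻, ξ₂⁻) with x₁ := √2·bd²/(ae), x₂ := √2·ac²/(be), y := √2·cd/e, ξ₁⁺ := −χ^{−1/2}·y·h⁻¹σ₁, ξ₂⁺ := −χ^{−1/2}·y·hσ₂, ξ₁⁻ := −χ^{1/2}·y·hσ₂, ξ₂⁻ := χ^{1/2}·y·h⁻¹σ₁, z := yσ₁σ₂/2, and let ⟨B,D⟩ := (1/2)(x₁^B x₂^D + x₂^B x₁^D) − y^B y^D + (1/2)(ξ₁⁺{}^B ξ₁⁻{}^D − ξ₂⁺{}^B ξ₂⁻{}^D − ξ₁⁻{}^B ξ₁⁺{}^D + ξ₂⁻{}^B ξ₂⁺{}^D) + z^B z^D. Then e²·⟨B,D⟩ = (ac+bd)²·(1 + h⁻²σ₁θ₂/(2(√χ + √χ⁻¹))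 + h²σ₂θ₁/(2(√χ + √χ⁻¹)))², i.e. the super Ptolemy relation ef = (ac+bd)(1 + h⁻²σ₁θ₂/(2(√χ+√χ⁻¹)) + h²σ₂θ₁/(2(√χ+√χ⁻¹))) holds for f with f² = ⟨B,D⟩. -/

import Mathlib

/-
Put ε₁ = σ₁θ₂ and ε₂ = σ₂θ₁. Since odd elements anticommute and square to zero, ε₁ and ε₂ are
commuting square-zero elements with ε₁ε₂ = θ₁θ₂σ₁σ₂. Expanding the pairing, the bosonic terms give
(ac+bd)²/e², the odd coordinates give (abcd/e²)(√χ+√χ⁻¹)(h⁻²ε₁+h²ε₂) and the z-coordinates give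
(abcd/2e²)ε₁ε₂, while the square of C = 1 + pε₁ + qε₂ is 1 + 2pε₁ + 2qε₂ + 2pqε₁ε₂. Comparing
coefficients, everything reduces to abcd(√χ+√χ⁻¹)² = (ac+bd)², which is χ + 2 + χ⁻¹ = (ac+bd)²/(abcd).
-/

noncomputable section

variable {V : Type*} [AddCommGroup V] [Module ℝ V]

/-- Membership in the odd part Λ₁ of the Grassmann algebra. -/
def IsOdd (x : ExteriorAlgebra ℝ V) : Prop :=
  x ∈ CliffordAlgebra.evenOdd (0 : QuadraticForm ℝ V) 1

/-- A coordinate tuple (x₁,x₂,y,z | ξ₁⁺,ξ₂⁺,ξ₁⁻,ξ₂⁻) in superspace ℝ^{2,2|4}. -/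
structure STuple (V : Type*) [AddCommGroup V] [Module ℝ V] where
  x₁ : ExteriorAlgebra ℝ V
  x₂ : ExteriorAlgebra ℝ V
  y : ExteriorAlgebra ℝ V
  z : ExteriorAlgebra ℝ V
  ξ₁p : ExteriorAlgebra ℝ V
  ξ₂p : ExteriorAlgebra ℝ V
  ξ₁m : ExteriorAlgebra ℝ V
  ξ₂m : ExteriorAlgebra ℝ V

/-- The Minkowski superpairing ⟨M,M′⟩. -/
def spair (M M' : STuple V) : ExteriorAlgebra ℝ V :=
  (1/2 : ℝ) • (M.x₁ * M'.x₂ + M.x₂ * M'.x₁) - M.y * M'.y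
    + (1/2 : ℝ) • (M.ξ₁p * M'.ξ₁m - M.ξ₂p * M'.ξ₂m - M.ξ₁m * M'.ξ₁p
        + M.ξ₂m * M'.ξ₂p)
    + M.z * M'.z

section

variable {R A : Type*} [CommRing R] [Ring A] [Algebra R A]

theorem one_add_smul_add_smul_mul_self {u v : A} (hu : u * u = 0) (hv : v * v = 0)
    (huv : v * u = u * v) (p q : R) :
    (1 + p • u + q • v) * (1 + p • u + q • v) =
      1 + (2 * p) • u + (2 * q) • v + (2 * p * q) • (u * v) := by
  simp only [add_mul, mul_add, smul_mul_smul_comm, one_mul, mul_one, hu, hv, huv, smul_zero]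
  module

end

namespace ExteriorAlgebra

variable {R M : Type*} [CommRing R] [AddCommGroup M] [Module R M]

local notation "Λ₁" => CliffordAlgebra.evenOdd (0 : QuadraticForm R M) 1

theorem ι_mul_eq_neg_mul_ι_of_mem_odd (v : M) {y : ExteriorAlgebra R M} (hy : y ∈ Λ₁) :
    ι R v * y = -(y * ι R v) := by
  induction y, hy using CliffordAlgebra.odd_induction with
  | ι w => exact eq_neg_of_add_eq_zero_left (ι_add_mul_swap v w)
  | add x y _ _ ihx ihy => rw [mul_add, add_mul, ihx, ihy, neg_add]
  | ι_mul_ι_mul m₁ m₂ x _ ih =>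
    have h₁ := eq_neg_of_add_eq_zero_left (ι_add_mul_swap (R := R) v m₁)
    have h₂ := eq_neg_of_add_eq_zero_left (ι_add_mul_swap (R := R) v m₂)
    linear_combination (norm := noncomm_ring)
      h₁ * (ι R m₂ * x) - ι R m₁ * h₂ * x + (ι R m₁ * ι R m₂) * ih

theorem mul_eq_neg_mul_of_mem_odd {x y : ExteriorAlgebra R M} (hx : x ∈ Λ₁) (hy : y ∈ Λ₁) :
    x * y = -(y * x) := by
  induction x, hx using CliffordAlgebra.odd_induction with
  | ι v => exact ι_mul_eq_neg_mul_ι_of_mem_odd v hy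
  | add x x' _ _ ihx ihx' => rw [add_mul, mul_add, ihx, ihx', neg_add]
  | ι_mul_ι_mul m₁ m₂ x _ ih =>
    have h₁ := ι_mul_eq_neg_mul_ι_of_mem_odd m₁ hy
    have h₂ := ι_mul_eq_neg_mul_ι_of_mem_odd m₂ hy
    linear_combination (norm := noncomm_ring)
      (ι R m₁ * ι R m₂) * ih - ι R m₁ * h₂ * x + h₁ * (ι R m₂ * x)

theorem mul_self_eq_zero_of_mem_odd {x : ExteriorAlgebra R M} (hx : x ∈ Λ₁) : x * x = 0 := by
  induction x, hx using CliffordAlgebra.odd_induction with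
  | ι v => exact ι_sq_zero v
  | add x y hx hy ihx ihy =>
    linear_combination (norm := noncomm_ring) ihx + ihy + mul_eq_neg_mul_of_mem_odd hx hy
  | ι_mul_ι_mul m₁ m₂ x hx ih =>
    have h₁ := ι_mul_eq_neg_mul_ι_of_mem_odd m₁ hx
    have h₂ := ι_mul_eq_neg_mul_ι_of_mem_odd m₂ hx
    linear_combination (norm := noncomm_ring)
      ι R m₁ * ι R m₂ * (h₁ * ι R m₂ - ι R m₁ * h₂) * x + (ι R m₁ * ι R m₂) ^ 2 * ih

theorem mul_mul_self_eq_zero_of_mem_odd {a b : ExteriorAlgebra R M} (ha : a ∈ Λ₁)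
    (hb : b ∈ Λ₁) : a * b * (a * b) = 0 := by
  linear_combination (norm := noncomm_ring) a * mul_eq_neg_mul_of_mem_odd hb ha * b
    - mul_self_eq_zero_of_mem_odd ha * (b * b)

theorem commute_mul_mul_of_mem_odd {a b c d : ExteriorAlgebra R M} (ha : a ∈ Λ₁) (hb : b ∈ Λ₁)
    (hc : c ∈ Λ₁) (hd : d ∈ Λ₁) : Commute (a * b) (c * d) := by
  have hbc := mul_eq_neg_mul_of_mem_odd hb hc
  have hac := mul_eq_neg_mul_of_mem_odd ha hc
  have hbd := mul_eq_neg_mul_of_mem_odd hb hd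
  have had := mul_eq_neg_mul_of_mem_odd ha hd
  unfold Commute SemiconjBy
  linear_combination (norm := noncomm_ring)
    a * hbc * d - hac * b * d + c * a * hbd - c * had * b

end ExteriorAlgebra

open ExteriorAlgebra

def tupleB (k h : ℝ) (θ₁ θ₂ : ExteriorAlgebra ℝ V) : STuple V :=
  ⟨algebraMap ℝ _ k, algebraMap ℝ _ k, algebraMap ℝ _ k, (k / 2) • (θ₁ * θ₂),
    (k * h) • θ₁, (k / h) • θ₂, -((k / h) • θ₂), (k * h) • θ₁⟩

def tupleD (X₁ X₂ Y s h : ℝ) (σ₁ σ₂ : ExteriorAlgebra ℝ V) : STuple V :=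
  ⟨algebraMap ℝ _ X₁, algebraMap ℝ _ X₂, -(algebraMap ℝ _ Y), (Y / 2) • (σ₁ * σ₂),
    -((s⁻¹ * Y / h) • σ₁), -((s⁻¹ * Y * h) • σ₂), -((s * Y * h) • σ₂), (s * Y / h) • σ₁⟩

theorem spair_tupleB_tupleD (k h X₁ X₂ Y s : ℝ) {θ₁ θ₂ σ₁ σ₂ : ExteriorAlgebra ℝ V}
    (hθ₁ : IsOdd θ₁) (hθ₂ : IsOdd θ₂) (hσ₁ : IsOdd σ₁) (hσ₂ : IsOdd σ₂) :
    spair (tupleB k h θ₁ θ₂) (tupleD X₁ X₂ Y s h σ₁ σ₂) =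
      algebraMap ℝ _ (k * (X₁ + X₂) / 2 + k * Y)
        + (k * Y * (s + s⁻¹) / 2) • ((h ^ 2)⁻¹ • (σ₁ * θ₂) + h ^ 2 • (σ₂ * θ₁))
        + (k * Y / 4) • (σ₁ * θ₂ * (σ₂ * θ₁)) := by
  have hθσ : θ₁ * θ₂ * (σ₁ * σ₂) = σ₁ * θ₂ * (σ₂ * θ₁) := by
    linear_combination (norm := noncomm_ring)
      -(σ₁ * θ₂ * mul_eq_neg_mul_of_mem_odd hθ₁ hσ₂)
        + σ₁ * mul_eq_neg_mul_of_mem_odd hθ₁ hθ₂ * σ₂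
        - mul_eq_neg_mul_of_mem_odd hθ₁ hσ₁ * θ₂ * σ₂
        + θ₁ * mul_eq_neg_mul_of_mem_odd hθ₂ hσ₁ * σ₂
  simp only [spair, tupleB, tupleD, Algebra.algebraMap_eq_smul_one, smul_mul_smul_comm,
    mul_one, neg_mul, mul_neg, neg_neg, smul_neg,
    mul_eq_neg_mul_of_mem_odd hθ₁ hσ₂, mul_eq_neg_mul_of_mem_odd hθ₂ hσ₁, hθσ]
  match_scalars <;> ring

theorem mul_mul_sqrt_div_add_inv_sq {x y : ℝ} (hx : 0 < x) (hy : 0 < y) :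
    x * y * (√(x / y) + (√(x / y))⁻¹) ^ 2 = (x + y) ^ 2 := by
  have hs : 0 < √(x / y) := Real.sqrt_pos.2 (by positivity)
  have hss : √(x / y) ^ 2 = x / y := Real.sq_sqrt (by positivity)
  field_simp
  rw [hss]
  field_simp

theorem stmt10 (a b c d e h χ : ℝ)
    (ha : 0 < a) (hb : 0 < b) (hc : 0 < c) (hd : 0 < d) (he : 0 < e)
    (hh : 0 < h) (hχ : χ = a * c / (b * d))
    (θ₁ θ₂ σ₁ σ₂ : ExteriorAlgebra ℝ V)
    (hθ₁ : IsOdd θ₁) (hθ₂ : IsOdd θ₂) (hσ₁ : IsOdd σ₁) (hσ₂ : IsOdd σ₂)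
    -- the tuple B := (√2·ab/e)·(1,1,1,θ₁θ₂/2 | hθ₁, h⁻¹θ₂, −h⁻¹θ₂, hθ₁)
    (BT : STuple V)
    (hBT : BT = ⟨algebraMap ℝ _ (Real.sqrt 2 * (a * b / e)),
                 algebraMap ℝ _ (Real.sqrt 2 * (a * b / e)),
                 algebraMap ℝ _ (Real.sqrt 2 * (a * b / e)),
                 (Real.sqrt 2 * (a * b / e) / 2) • (θ₁ * θ₂),
                 (Real.sqrt 2 * (a * b / e) * h) • θ₁,
                 (Real.sqrt 2 * (a * b / e) / h) • θ₂,
                 -((Real.sqrt 2 * (a * b / e) / h) • θ₂),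
                 (Real.sqrt 2 * (a * b / e) * h) • θ₁⟩)
    -- the tuple D := (x₁, x₂, −y, z | ξ₁⁺, ξ₂⁺, ξ₁⁻, ξ₂⁻) with
    -- x₁ = √2·bd²/(ae), x₂ = √2·ac²/(be), y = √2·cd/e,
    -- ξ₁⁺ = −χ^{−1/2}yh⁻¹σ₁, ξ₂⁺ = −χ^{−1/2}yhσ₂, ξ₁⁻ = −χ^{1/2}yhσ₂,
    -- ξ₂⁻ = χ^{1/2}yh⁻¹σ₁, z = yσ₁σ₂/2
    (DT : STuple V)
    (hDT : DT = ⟨algebraMap ℝ _ (Real.sqrt 2 * (b * d ^ 2 / (a * e))),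
                 algebraMap ℝ _ (Real.sqrt 2 * (a * c ^ 2 / (b * e))),
                 -(algebraMap ℝ _ (Real.sqrt 2 * (c * d / e))),
                 (Real.sqrt 2 * (c * d / e) / 2) • (σ₁ * σ₂),
                 -(((Real.sqrt χ)⁻¹ * (Real.sqrt 2 * (c * d / e)) / h) • σ₁),
                 -(((Real.sqrt χ)⁻¹ * (Real.sqrt 2 * (c * d / e)) * h) • σ₂),
                 -((Real.sqrt χ * (Real.sqrt 2 * (c * d / e)) * h) • σ₂),
                 (Real.sqrt χ * (Real.sqrt 2 * (c * d / e)) / h) • σ₁⟩)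
    -- the fermionic correction factor
    (C : ExteriorAlgebra ℝ V)
    (hC : C = 1 + ((h ^ 2)⁻¹ / (2 * (Real.sqrt χ + (Real.sqrt χ)⁻¹))) • (σ₁ * θ₂)
        + (h ^ 2 / (2 * (Real.sqrt χ + (Real.sqrt χ)⁻¹))) • (σ₂ * θ₁)) :
    (e ^ 2 : ℝ) • spair BT DT = algebraMap ℝ _ ((a * c + b * d) ^ 2) * (C * C) := by
  have hPtolemy : a * c * (b * d) * (√χ + (√χ)⁻¹) ^ 2 = (a * c + b * d) ^ 2 := by
    rw [hχ]
    exact mul_mul_sqrt_div_add_inv_sq (by positivity) (by positivity)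
  have hs : 0 < √χ := Real.sqrt_pos.2 (by rw [hχ]; positivity)
  have h2 : √2 ^ 2 = 2 := Real.sq_sqrt zero_le_two
  obtain rfl : BT = tupleB (√2 * (a * b / e)) h θ₁ θ₂ := hBT
  obtain rfl : DT = tupleD (√2 * (b * d ^ 2 / (a * e))) (√2 * (a * c ^ 2 / (b * e)))
    (√2 * (c * d / e)) (√χ) h σ₁ σ₂ := hDT
  rw [spair_tupleB_tupleD _ _ _ _ _ _ hθ₁ hθ₂ hσ₁ hσ₂, hC,
    one_add_smul_add_smul_mul_self (mul_mul_self_eq_zero_of_mem_odd hσ₁ hθ₂)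
      (mul_mul_self_eq_zero_of_mem_odd hσ₂ hθ₁)
      (commute_mul_mul_of_mem_odd hσ₂ hθ₁ hσ₁ hθ₂).eq]
  set t := √χ + (√χ)⁻¹
  have ht : 0 < t := add_pos hs (inv_pos.2 hs)
  simp only [Algebra.algebraMap_eq_smul_one, smul_mul_assoc, one_mul]
  match_scalars
  all_goals field_simp; rw [h2]
  · ring
  · linear_combination 2 * hPtolemy
  · linear_combination 2 * hPtolemy
  · linear_combination 4 * hPtolemy
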